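/- arXiv:1208.5639 — 6 statements merged into one kernel-verified Lean document; each statement's English description precedes it below -/
import Mathlib

section
/- Let k ≥ 1, n ≥ 2k², and define S ⊂ {0,1}ⁿ as the set of vectors x_i (0 ≤ i ≤ k) where x_i has its first i coordinates equal to 1 among the first k coordinates, and coordinates k+1 through k+i² equal to 1, and all other coordinates 0. Let W be the 2×n binary matrix whose first k columns equal (1,0) and whose next k² columns equal (0,1) and remaining columns are zero. Then the image WS equals {(i, i²) : 0 ≤ i ≤ k}, which is a set of k+1 points in strictly convex position, so the convex hull conv(WS) has exactly k+1 vertices. -/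
/-!
Row 0 of `W` counts the leading ones of `x i` and row 1 the ones in the block after
position `k`, so `W x_i = (i, i²)`. Each point `(t, t²)` of the parabola is the unique maximiser
over the parabola of the linear functional `z ↦ 2 t z₀ - z₁` (whose level line is the tangent at
`t`), hence an exposed and in particular extreme point of the convex hull of any set of parabola
points.
-/

open Set Matrix

section ExposedPoints

variable {E : Type*} [AddCommGroup E] [Module ℝ E]

theorem convex_insert_setOf_lt (l : E →ₗ[ℝ] ℝ) (x : E) :
    Convex ℝ (insert x {z | l z < l x}) := by
  intro u hu v hv a b ha hb hab
  rcases ha.eq_or_lt with rfl | ha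
  · rw [zero_add] at hab
    simpa [hab] using hv
  rcases hb.eq_or_lt with rfl | hb
  · rw [add_zero] at hab
    simpa [hab] using hu
  obtain rfl : a = 1 - b := by linarith
  have hcomb : l ((1 - b) • u + b • v) = (1 - b) * l u + b * l v := by simp
  rcases hu with rfl | hu <;> rcases hv with rfl | hv
  · left
    rw [← add_smul, hab, one_smul]
  all_goals
    right
    simp only [mem_ofPred_eq, hcomb] at *
  · linarith [mul_lt_mul_of_pos_left hv hb]
  · linarith [mul_lt_mul_of_pos_left hu ha]
  · linarith [mul_lt_mul_of_pos_left hu ha, mul_lt_mul_of_pos_left hv hb]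

theorem mem_exposedPoints_convexHull_of_forall_lt [TopologicalSpace E] {s : Set E} {x : E}
    (hx : x ∈ s) (l : StrongDual ℝ E) (hl : ∀ y ∈ s, y ≠ x → l y < l x) :
    x ∈ (convexHull ℝ s).exposedPoints ℝ := by
  have hhull : convexHull ℝ s ⊆ insert x {z | l z < l x} :=
    convexHull_min (fun y hy => (eq_or_ne y x).imp id (hl y hy))
      (convex_insert_setOf_lt (l : E →ₗ[ℝ] ℝ) x)
  refine ⟨subset_convexHull ℝ s hx, l, fun y hy => ?_⟩
  rcases hhull hy with rfl | hlt
  · exact ⟨le_rfl, fun _ => rfl⟩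
  · exact ⟨hlt.le, fun hle => absurd hle (not_le.2 hlt)⟩

end ExposedPoints

theorem extremePoints_convexHull_image_parabola (s : Set ℝ) :
    (convexHull ℝ ((fun t : ℝ => ![t, t ^ 2]) '' s)).extremePoints ℝ =
      (fun t : ℝ => ![t, t ^ 2]) '' s := by
  refine subset_antisymm extremePoints_convexHull_subset ?_
  rintro _ ⟨t, ht, rfl⟩
  refine exposedPoints_subset_extremePoints
    (mem_exposedPoints_convexHull_of_forall_lt (mem_image_of_mem _ ht)
      ((2 * t) • ContinuousLinearMap.proj 0 - ContinuousLinearMap.proj 1) ?_)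
  rintro _ ⟨u, -, rfl⟩ hne
  have hut : u - t ≠ 0 := sub_ne_zero.2 fun h => hne (h ▸ rfl)
  -- the tangent line of the parabola at `t` lies strictly above every other point of it
  show 2 * t * u - u ^ 2 < 2 * t * t - t ^ 2
  linarith [sq_pos_of_ne_zero hut]

theorem sum_fin_ite_Ico {R : Type*} [AddCommMonoidWithOne R] {n a b : ℕ} (hb : b ≤ n) :
    ∑ j : Fin n, (if a ≤ (j : ℕ) ∧ (j : ℕ) < b then (1 : R) else 0) = (b - a : ℕ) := by
  rw [Fin.sum_univ_eq_sum_range (fun j => if a ≤ j ∧ j < b then (1 : R) else 0), Finset.sum_boole]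
  congr
  rw [← Nat.card_Ico]
  congr 1
  ext j
  simp only [Finset.mem_filter, Finset.mem_range, Finset.mem_Ico]
  omega

theorem mulVec_eq_of_forall_eq_ite {k n i : ℕ} (hi : i ≤ k) (hn : k + k * k ≤ n)
    {v : Fin n → ℝ}
    (hv : ∀ j : Fin n, v j = if (j : ℕ) < i ∨ (k ≤ (j : ℕ) ∧ (j : ℕ) < k + i * i) then 1 else 0)
    {W : Matrix (Fin 2) (Fin n) ℝ}
    (hW0 : ∀ j : Fin n, W 0 j = if (j : ℕ) < k then 1 else 0)
    (hW1 : ∀ j : Fin n, W 1 j = if k ≤ (j : ℕ) ∧ (j : ℕ) < k + k * k then 1 else 0) :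
    W *ᵥ v = ![(i : ℝ), (i : ℝ) ^ 2] := by
  have hii : i * i ≤ k * k := Nat.mul_self_le_mul_self hi
  ext r
  fin_cases r
  · calc (W *ᵥ v) 0 = ∑ j : Fin n, if 0 ≤ (j : ℕ) ∧ (j : ℕ) < i then (1 : ℝ) else 0 := by
          simp only [mulVec, dotProduct]
          refine Finset.sum_congr rfl fun j _ => ?_
          rw [hW0, hv]
          split_ifs <;> first | omega | simp
      _ = i := by rw [sum_fin_ite_Ico (by omega), Nat.sub_zero]
  · calc (W *ᵥ v) 1 = ∑ j : Fin n, if k ≤ (j : ℕ) ∧ (j : ℕ) < k + i * i then (1 : ℝ) else 0 := by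
          simp only [mulVec, dotProduct]
          refine Finset.sum_congr rfl fun j _ => ?_
          rw [hW1, hv]
          split_ifs <;> first | omega | simp
      _ = (i : ℝ) ^ 2 := by
          rw [sum_fin_ite_Ico (by omega), Nat.add_sub_cancel_left]
          push_cast
          ring

theorem stmt_0_general (k n : ℕ) (hn : 2 * k ^ 2 ≤ n)
    (x : ℕ → Fin n → ℝ)
    (hx : ∀ i : ℕ, i ≤ k → ∀ j : Fin n,
      x i j = if (j : ℕ) < i ∨ (k ≤ (j : ℕ) ∧ (j : ℕ) < k + i * i) then 1 else 0)
    (S : Set (Fin n → ℝ)) (hS : S = {y | ∃ i : ℕ, i ≤ k ∧ y = x i})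
    (W : Matrix (Fin 2) (Fin n) ℝ)
    (hW0 : ∀ j : Fin n, W 0 j = if (j : ℕ) < k then 1 else 0)
    (hW1 : ∀ j : Fin n, W 1 j = if k ≤ (j : ℕ) ∧ (j : ℕ) < k + k * k then 1 else 0) :
    W.mulVec '' S = {p : Fin 2 → ℝ | ∃ i : ℕ, i ≤ k ∧ p = ![(i : ℝ), (i : ℝ) ^ 2]} ∧
    Set.extremePoints ℝ (convexHull ℝ (W.mulVec '' S)) = W.mulVec '' S ∧
    (Set.extremePoints ℝ (convexHull ℝ (W.mulVec '' S))).ncard = k + 1 := by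
  have hkn : k + k * k ≤ n := by nlinarith [Nat.le_mul_self k]
  have hWx (i : ℕ) (hi : i ≤ k) : W *ᵥ x i = ![(i : ℝ), (i : ℝ) ^ 2] :=
    mulVec_eq_of_forall_eq_ite hi hkn (hx i hi) hW0 hW1
  have himage : W.mulVec '' S = (fun t : ℝ => ![t, t ^ 2]) '' ((↑) '' Iic k) := by
    ext p
    simp only [hS, mem_image, mem_ofPred_eq, mem_Iic]
    constructor
    · rintro ⟨_, ⟨i, hi, rfl⟩, rfl⟩
      exact ⟨i, ⟨i, hi, rfl⟩, (hWx i hi).symm⟩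
    · rintro ⟨_, ⟨i, hi, rfl⟩, rfl⟩
      exact ⟨x i, ⟨i, hi, rfl⟩, hWx i hi⟩
  have hinj : Function.Injective (fun t : ℝ => ![t, t ^ 2]) := fun s t h => congrFun h 0
  rw [himage, extremePoints_convexHull_image_parabola]
  refine ⟨by ext; simp [eq_comm], rfl, ?_⟩
  rw [ncard_image_of_injective _ hinj, ncard_image_of_injective _ Nat.cast_injective,
    ncard_Iic_nat]

/-- For `k ≥ 1` and `n ≥ 2k²`, with `S = {x_0, …, x_k} ⊆ {0,1}ⁿ` where `x_i` has its
first `i` coordinates (among the first `k`) equal to `1` and coordinates `k+1,…,k+i²`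
equal to `1`, and `W` the binary `2 × n` matrix whose first `k` columns are `(1,0)`,
next `k²` columns are `(0,1)` and remaining columns are zero, the image `WS` equals
`{(i, i²) : 0 ≤ i ≤ k}`, every point of it is a vertex of `conv(WS)`, and
`conv(WS)` has exactly `k + 1` vertices. -/
theorem stmt_0 (k n : ℕ) (hk : 1 ≤ k) (hn : 2 * k ^ 2 ≤ n)
    (x : ℕ → Fin n → ℝ)
    (hx : ∀ i : ℕ, i ≤ k → ∀ j : Fin n,
      x i j = if (j : ℕ) < i ∨ (k ≤ (j : ℕ) ∧ (j : ℕ) < k + i * i) then 1 else 0)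
    (S : Set (Fin n → ℝ)) (hS : S = {y | ∃ i : ℕ, i ≤ k ∧ y = x i})
    (W : Matrix (Fin 2) (Fin n) ℝ)
    (hW0 : ∀ j : Fin n, W 0 j = if (j : ℕ) < k then 1 else 0)
    (hW1 : ∀ j : Fin n, W 1 j = if k ≤ (j : ℕ) ∧ (j : ℕ) < k + k * k then 1 else 0) :
    W.mulVec '' S = {p : Fin 2 → ℝ | ∃ i : ℕ, i ≤ k ∧ p = ![(i : ℝ), (i : ℝ) ^ 2]} ∧
    Set.extremePoints ℝ (convexHull ℝ (W.mulVec '' S)) = W.mulVec '' S ∧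
    (Set.extremePoints ℝ (convexHull ℝ (W.mulVec '' S))).ncard = k + 1 :=
  stmt_0_general k n hn x hx S hS W hW0 hW1
end

section
/- Let S ⊂ ℤⁿ be a finite set, let W be a d×n integer matrix, and suppose every edge of the polytope conv(S) is parallel to some integer vector v with ‖v‖₁ ≤ e. Then every edge of the polytope conv(WS) = {Wx : x ∈ conv(S)} is parallel to some vector in the set {-q, …, -1, 0, 1, …, q}^d, where q = e·‖W‖_∞ and ‖W‖_∞ = max_{i,j} |W_{i,j}|. -/
/-!
The preimage under `W` of an edge `[u, v]` of `conv (W S)` is a face `G` of `conv S`, and `G` is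
the convex hull of the points of `S` it contains. As `W` is not constant on `G`, some edge `[a, b]`
of `G` is not collapsed by `W`; since a face of a face is a face, `[a, b]` is an edge of `conv S`.
Then `W a` and `W b` are distinct points of `[u, v]`, so `u - v` is parallel to
`W (a - b)`, a multiple of `W w` with `‖w‖₁ ≤ e`, and `‖W w‖_∞ ≤ ‖W‖_∞ ‖w‖₁ ≤ q`.

The edge `[a, b]` is found by descending through exposed faces: if the points of a face are not
collinear, some functional `ψ` is not an affine function of the functional `φ` we want to be
non-constant, and tilting `ψ` by a multiple of `φ` exposes a proper subface on which `φ` is still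
non-constant.
-/

/-- The segment `[u,v]` (with `u ≠ v`) is an edge of the convex set `P`,
i.e. a 1-dimensional face (extreme set). -/
def IsEdgeOf {n : ℕ} (P : Set (Fin n → ℝ)) (u v : Fin n → ℝ) : Prop :=
  u ≠ v ∧ IsExtreme ℝ P (segment ℝ u v)

/-- `u - v` is parallel to the integer vector `w`. -/
def ParallelToInt {n : ℕ} (u v : Fin n → ℝ) (w : Fin n → ℤ) : Prop :=
  ∃ c : ℝ, c ≠ 0 ∧ u - v = c • fun j => (w j : ℝ)

open Set
open scoped Matrix

section Faces

variable {𝕜 E F : Type*} [Field 𝕜] [AddCommGroup E] [Module 𝕜 E] [AddCommGroup F] [Module 𝕜 F]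

theorem add_smul_sub_eq_of_forall_dual_affine {s : Set E} {φ : E →ₗ[𝕜] 𝕜}
    (h : ∀ ψ : Module.Dual 𝕜 E, ∃ α β : 𝕜, ∀ x ∈ s, ψ x = α * φ x + β) {a b x : E}
    (ha : a ∈ s) (hb : b ∈ s) (hx : x ∈ s) (hab : φ a ≠ φ b) :
    a + ((φ x - φ a) / (φ b - φ a)) • (b - a) = x := by
  rw [← sub_eq_zero, ← Module.forall_dual_apply_eq_zero_iff 𝕜]
  intro ψ
  obtain ⟨α, β, hψ⟩ := h ψ
  have hba : φ b - φ a ≠ 0 := sub_ne_zero.2 hab.symm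
  simp only [map_sub, map_add, map_smul, smul_eq_mul, hψ a ha, hψ b hb, hψ x hx]
  field_simp
  ring

variable [LinearOrder 𝕜] [IsStrictOrderedRing 𝕜]

theorem IsExtreme.subset_convexHull_inter {s B : Set E} (hB : IsExtreme 𝕜 (convexHull 𝕜 s) B) :
    B ⊆ convexHull 𝕜 (s ∩ B) := by
  classical
  suffices key : ∀ t : Finset E, ↑t ⊆ s → ∀ x ∈ convexHull 𝕜 (t : Set E), x ∈ B →
      x ∈ convexHull 𝕜 (s ∩ B) by
    intro x hx
    have := hB.1 hx
    rw [convexHull_eq_union_convexHull_finite_subsets, mem_iUnion₂] at this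
    obtain ⟨t, hts, hxt⟩ := this
    exact key t hts x hxt hx
  intro t
  induction t using Finset.induction_on with
  | empty => simp
  | insert a t _ ih =>
    intro hts x hx hxB
    rw [Finset.coe_insert, insert_subset_iff] at hts
    rcases t.eq_empty_or_nonempty with rfl | ht
    · obtain rfl : x = a := by simpa using hx
      exact subset_convexHull 𝕜 _ ⟨hts.1, hxB⟩
    rw [Finset.coe_insert, convexHull_insert (by exact_mod_cast ht), mem_convexJoin] at hx
    obtain ⟨_, rfl, y, hy, hxy⟩ := hx
    rw [← insert_endpoints_openSegment] at hxy
    rcases hxy with rfl | rfl | hxy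
    · exact subset_convexHull 𝕜 _ ⟨hts.1, hxB⟩
    · exact ih hts.2 x hy hxB
    · have ha := subset_convexHull 𝕜 _ hts.1
      have hy' := convexHull_mono hts.2 hy
      have haB := hB.left_mem_of_mem_openSegment ha hy' hxB hxy
      have hyB := hB.right_mem_of_mem_openSegment ha hy' hxB hxy
      exact (convex_convexHull 𝕜 _).segment_subset (subset_convexHull 𝕜 (s ∩ B) ⟨hts.1, haB⟩)
        (ih hts.2 y hy hyB) (openSegment_subset_segment _ _ _ hxy)

theorem IsExtreme.eq_convexHull_inter {s B : Set E} (hB : IsExtreme 𝕜 (convexHull 𝕜 s) B)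
    (hBc : Convex 𝕜 B) : B = convexHull 𝕜 (s ∩ B) :=
  hB.subset_convexHull_inter.antisymm (convexHull_min inter_subset_right hBc)

theorem IsExtreme.inter_preimage {A : Set E} (f : E →ₗ[𝕜] F) {B C : Set F}
    (hBC : IsExtreme 𝕜 B C) (hAB : MapsTo f A B) : IsExtreme 𝕜 A (A ∩ f ⁻¹' C) := by
  refine ⟨inter_subset_left, fun x₁ hx₁ x₂ hx₂ x hx hx₁₂ => ?_⟩
  have hfx : f x ∈ openSegment 𝕜 (f x₁) (f x₂) := by
    simpa using image_openSegment 𝕜 f.toAffineMap x₁ x₂ ▸ mem_image_of_mem f hx₁₂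
  exact ⟨hx₁, hBC.left_mem_of_mem_openSegment (hAB hx₁) (hAB hx₂) hx.2 hfx⟩

theorem isExtreme_sep_eq_of_forall_le {A : Set E} (ℓ : E →ₗ[𝕜] 𝕜) {M : 𝕜}
    (hM : ∀ x ∈ A, ℓ x ≤ M) : IsExtreme 𝕜 A {x ∈ A | ℓ x = M} := by
  refine ⟨sep_subset _ _, fun x₁ hx₁ x₂ hx₂ x hx ⟨a, b, ha, hb, hab, hx₁₂⟩ => ?_⟩
  have hℓ : a * ℓ x₁ + b * ℓ x₂ = M := by
    rw [← hx.2, ← hx₁₂]; simp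
  have key : a * (M - ℓ x₁) = b * (ℓ x₂ - M) := by linear_combination M * hab - hℓ
  have : b * (ℓ x₂ - M) ≤ 0 := mul_nonpos_of_nonneg_of_nonpos hb.le (sub_nonpos.2 (hM x₂ hx₂))
  exact ⟨hx₁, le_antisymm (hM x₁ hx₁) (by nlinarith)⟩

theorem isExtreme_convexHull_sep_eq_of_forall_le {s : Set E} (ℓ : E →ₗ[𝕜] 𝕜) {M : 𝕜}
    (hM : ∀ x ∈ s, ℓ x ≤ M) :
    IsExtreme 𝕜 (convexHull 𝕜 s) (convexHull 𝕜 {x ∈ s | ℓ x = M}) := by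
  have hM' : ∀ x ∈ convexHull 𝕜 s, ℓ x ≤ M :=
    fun x hx => convexHull_min hM (convex_halfSpace_le ℓ.isLinear M) hx
  have hF := isExtreme_sep_eq_of_forall_le ℓ hM'
  have hFc : Convex 𝕜 {x ∈ convexHull 𝕜 s | ℓ x = M} :=
    (convex_convexHull 𝕜 s).inter (convex_hyperplane ℓ.isLinear M)
  convert hF using 1
  rw [hF.eq_convexHull_inter hFc]
  congr 1
  ext x
  simp only [mem_sep_iff, mem_inter_iff]
  exact ⟨fun h => ⟨h.1, subset_convexHull 𝕜 s h.1, h.2⟩, fun h => ⟨h.1, h.2.2⟩⟩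

theorem exists_convexHull_eq_segment_of_forall_dual_affine (t : Finset E) {φ : E →ₗ[𝕜] 𝕜}
    (hφ : ∃ a ∈ t, ∃ b ∈ t, φ a ≠ φ b)
    (h : ∀ ψ : Module.Dual 𝕜 E, ∃ α β : 𝕜, ∀ x ∈ t, ψ x = α * φ x + β) :
    ∃ a b, convexHull 𝕜 (t : Set E) = segment 𝕜 a b ∧ φ a ≠ φ b := by
  obtain ⟨x₀, hx₀, y₀, hy₀, hxy₀⟩ := hφ
  obtain ⟨a, ha, hamin⟩ := t.exists_min_image φ ⟨x₀, hx₀⟩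
  obtain ⟨b, hb, hbmax⟩ := t.exists_max_image φ ⟨x₀, hx₀⟩
  have hab : φ a < φ b := by
    by_contra! hba
    have h₁ := hamin x₀ hx₀; have h₂ := hbmax x₀ hx₀
    have h₃ := hamin y₀ hy₀; have h₄ := hbmax y₀ hy₀
    exact hxy₀ (by linarith)
  refine ⟨a, b, (convexHull_min ?_ (convex_segment a b)).antisymm ?_, hab.ne⟩
  · intro x hx
    rw [segment_eq_image']
    refine ⟨(φ x - φ a) / (φ b - φ a), ⟨?_, ?_⟩,
      add_smul_sub_eq_of_forall_dual_affine h ha hb hx hab.ne⟩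
    · exact div_nonneg (sub_nonneg.2 (hamin x hx)) (sub_nonneg.2 hab.le)
    · exact div_le_one_of_le₀ (by linarith [hbmax x hx]) (sub_nonneg.2 hab.le)
  · rw [← convexHull_pair]
    exact convexHull_mono (insert_subset_iff.2 ⟨ha, singleton_subset_iff.2 hb⟩)

theorem exists_supporting_functional_of_not_affine {t : Finset E} {φ ψ : E →ₗ[𝕜] 𝕜}
    (hφ : ∃ a ∈ t, ∃ b ∈ t, φ a ≠ φ b) (hψ : ∀ α β : 𝕜, ∃ x ∈ t, ψ x ≠ α * φ x + β) :
    ∃ (ℓ : E →ₗ[𝕜] 𝕜) (M : 𝕜), (∀ x ∈ t, ℓ x ≤ M) ∧ (∃ x ∈ t, ℓ x ≠ M) ∧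
      ∃ a ∈ t, ∃ b ∈ t, ℓ a = M ∧ ℓ b = M ∧ φ a ≠ φ b := by
  classical
  obtain ⟨x₀, hx₀, y₀, hy₀, hxy₀⟩ := hφ
  obtain ⟨m, hm, hmmax⟩ := t.exists_max_image φ ⟨x₀, hx₀⟩
  obtain ⟨a, haA, haψ⟩ := (t.filter (φ · = φ m)).exists_max_image ψ ⟨m, by simp [hm]⟩
  rw [Finset.mem_filter] at haA
  have hB : (t.filter (φ · < φ m)).Nonempty := by
    by_contra! hB
    have hconst : ∀ x ∈ t, φ x = φ m := fun x hx =>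
      (hmmax x hx).eq_or_lt.resolve_right fun hlt => by
        simpa [hB] using (Finset.mem_filter.2 ⟨hx, hlt⟩ : x ∈ t.filter (φ · < φ m))
    exact hxy₀ ((hconst x₀ hx₀).trans (hconst y₀ hy₀).symm)
  obtain ⟨b, hbB, hbmax⟩ := (t.filter (φ · < φ m)).exists_max_image
    (fun x => (ψ x - ψ a) / (φ m - φ x)) hB
  rw [Finset.mem_filter] at hbB
  -- `c` is the steepest slope from `a` down to the points below the top level of `φ`, so
  -- `ψ + c • φ` is maximised both at `a` and at `b`.
  set c := (ψ b - ψ a) / (φ m - φ b)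
  have hℓ : ∀ x, (ψ + c • φ) x = ψ x + c * φ x := fun x => rfl
  refine ⟨ψ + c • φ, ψ a + c * φ m, fun x hx => ?_, ?_, a, haA.1, b, hbB.1, ?_, ?_, ?_⟩
  · rw [hℓ]
    rcases (hmmax x hx).eq_or_lt with hxm | hxm
    · have := haψ x (Finset.mem_filter.2 ⟨hx, hxm⟩)
      rw [hxm]
      linarith
    · have := hbmax x (Finset.mem_filter.2 ⟨hx, hxm⟩)
      rw [div_le_iff₀ (sub_pos.2 hxm)] at this
      linarith
  · obtain ⟨x, hx, hne⟩ := hψ (-c) (ψ a + c * φ m)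
    exact ⟨x, hx, fun h => hne (by rw [hℓ] at h; linarith)⟩
  · rw [hℓ, haA.2]
  · have : ψ b - ψ a = c * (φ m - φ b) := by
      rw [div_mul_cancel₀ _ (sub_pos.2 hbB.2).ne']
    rw [hℓ]
    linarith
  · exact haA.2.trans_ne hbB.2.ne'

theorem exists_isExtreme_segment_apply_ne (t : Finset E) (φ : E →ₗ[𝕜] 𝕜)
    (h : ∃ a ∈ t, ∃ b ∈ t, φ a ≠ φ b) :
    ∃ a b, IsExtreme 𝕜 (convexHull 𝕜 (t : Set E)) (segment 𝕜 a b) ∧ φ a ≠ φ b := by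
  classical
  induction t using Finset.strongInduction with
  | H t ih =>
  by_cases hψ : ∃ ψ : E →ₗ[𝕜] 𝕜, ∀ α β : 𝕜, ∃ x ∈ t, ψ x ≠ α * φ x + β
  · obtain ⟨ψ, hψ⟩ := hψ
    obtain ⟨ℓ, M, hM, ⟨x, hx, hxM⟩, a, ha, b, hb, haM, hbM, hab⟩ :=
      exists_supporting_functional_of_not_affine h hψ
    obtain ⟨a', b', hedge, hne⟩ := ih (t.filter (ℓ · = M)) (Finset.filter_ssubset.2 ⟨x, hx, hxM⟩)
      ⟨a, by simp [ha, haM], b, by simp [hb, hbM], hab⟩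
    refine ⟨a', b', IsExtreme.trans ?_ hedge, hne⟩
    rw [Finset.coe_filter]
    exact isExtreme_convexHull_sep_eq_of_forall_le ℓ hM
  · push Not at hψ
    obtain ⟨a, b, hseg, hab⟩ := exists_convexHull_eq_segment_of_forall_dual_affine t h hψ
    exact ⟨a, b, hseg ▸ IsExtreme.rfl, hab⟩

theorem exists_isExtreme_segment_map_ne (t : Finset E) (f : E →ₗ[𝕜] F) {x y : E}
    (hx : x ∈ convexHull 𝕜 (t : Set E)) (hy : y ∈ convexHull 𝕜 (t : Set E)) (hxy : f x ≠ f y) :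
    ∃ a b, IsExtreme 𝕜 (convexHull 𝕜 (t : Set E)) (segment 𝕜 a b) ∧ f a ≠ f b := by
  obtain ⟨χ, hχ⟩ : ∃ χ : Module.Dual 𝕜 F, χ (f x) ≠ χ (f y) := by
    by_contra! h
    refine hxy (sub_eq_zero.1 ((Module.forall_dual_apply_eq_zero_iff 𝕜 _).1 fun χ => ?_))
    rw [map_sub, h χ, sub_self]
  have hnonconst : ∃ a ∈ t, ∃ b ∈ t, (χ ∘ₗ f) a ≠ (χ ∘ₗ f) b := by
    by_contra! hconst
    obtain ⟨a, ha⟩ : t.Nonempty := by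
      simpa using (convexHull_nonempty_iff (𝕜 := 𝕜)).1 ⟨x, hx⟩
    have hlevel : convexHull 𝕜 (t : Set E) ⊆ {z | (χ ∘ₗ f) z = (χ ∘ₗ f) a} :=
      convexHull_min (fun z hz => hconst z hz a ha) (convex_hyperplane (χ ∘ₗ f).isLinear _)
    exact hχ ((hlevel hx).trans (hlevel hy).symm)
  obtain ⟨a, b, hab, hne⟩ := exists_isExtreme_segment_apply_ne t (χ ∘ₗ f) hnonconst
  exact ⟨a, b, hab, fun h => hne (by simp [h])⟩

theorem exists_isExtreme_segment_of_isExtreme_image {s : Set E} (hs : s.Finite)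
    (f : E →ₗ[𝕜] F) {u v : F} (hext : IsExtreme 𝕜 (convexHull 𝕜 (f '' s)) (segment 𝕜 u v))
    (huv : u ≠ v) :
    ∃ a b, IsExtreme 𝕜 (convexHull 𝕜 s) (segment 𝕜 a b) ∧ f a ≠ f b ∧
      f a ∈ segment 𝕜 u v ∧ f b ∈ segment 𝕜 u v := by
  set G := convexHull 𝕜 s ∩ f ⁻¹' segment 𝕜 u v
  have hG : IsExtreme 𝕜 (convexHull 𝕜 s) G :=
    hext.inter_preimage f fun x hx => f.image_convexHull s ▸ mem_image_of_mem f hx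
  set T := (hs.inter_of_left (f ⁻¹' segment 𝕜 u v)).toFinset
  have hGc : Convex 𝕜 G :=
    (convex_convexHull 𝕜 s).inter ((convex_segment u v).linear_preimage f)
  have hGT : G = convexHull 𝕜 (T : Set E) := by
    rw [hG.eq_convexHull_inter hGc, Finite.coe_toFinset]
    congr 1
    ext x
    simp only [G, mem_inter_iff]
    exact ⟨fun h => ⟨h.1, h.2.2⟩, fun h => ⟨h.1, subset_convexHull 𝕜 s h.1, h.2⟩⟩
  have hlift : ∀ w ∈ segment 𝕜 u v, ∃ x ∈ convexHull 𝕜 (T : Set E), f x = w := by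
    intro w hw
    obtain ⟨x, hx, rfl⟩ := (f.image_convexHull s).symm ▸ hext.subset hw
    exact ⟨x, hGT ▸ ⟨hx, hw⟩, rfl⟩
  obtain ⟨x, hx, rfl⟩ := hlift u (left_mem_segment 𝕜 u v)
  obtain ⟨y, hy, rfl⟩ := hlift v (right_mem_segment 𝕜 _ v)
  obtain ⟨a, b, hab, hne⟩ := exists_isExtreme_segment_map_ne T f hx hy huv
  have hsegG : segment 𝕜 a b ⊆ G := hGT ▸ hab.subset
  exact ⟨a, b, hG.trans (hGT ▸ hab), hne, (hsegG (left_mem_segment 𝕜 a b)).2,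
    (hsegG (right_mem_segment 𝕜 a b)).2⟩

theorem exists_ne_zero_sub_eq_smul_of_mem_segment {u v p q : E} (hp : p ∈ segment 𝕜 u v)
    (hq : q ∈ segment 𝕜 u v) (hpq : p ≠ q) : ∃ r : 𝕜, r ≠ 0 ∧ u - v = r • (p - q) := by
  rw [segment_eq_image'] at hp hq
  obtain ⟨θ, -, rfl⟩ := hp
  obtain ⟨θ', -, rfl⟩ := hq
  have hθ : θ' - θ ≠ 0 := sub_ne_zero.2 fun h => hpq (by rw [h])
  refine ⟨(θ' - θ)⁻¹, inv_ne_zero hθ, ?_⟩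
  match_scalars <;> field_simp <;> ring

end Faces

theorem Matrix.natAbs_mulVec_le {m n : Type*} [Fintype m] [Fintype n] (W : Matrix m n ℤ)
    (w : n → ℤ) (i : m) :
    ((W *ᵥ w) i).natAbs ≤
      (Finset.univ.sup fun p : m × n => (W p.1 p.2).natAbs) * ∑ j, (w j).natAbs := by
  calc ((W *ᵥ w) i).natAbs ≤ ∑ j, (W i j * w j).natAbs := Int.natAbs_sum_le _ _
    _ = ∑ j, (W i j).natAbs * (w j).natAbs := by simp only [Int.natAbs_mul]
    _ ≤ ∑ j, (Finset.univ.sup fun p : m × n => (W p.1 p.2).natAbs) * (w j).natAbs :=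
      Finset.sum_le_sum fun j _ => Nat.mul_le_mul_right _
        (Finset.le_sup (f := fun p : m × n => (W p.1 p.2).natAbs) (Finset.mem_univ (i, j)))
    _ = _ := Finset.mul_sum _ _ _ |>.symm

/-- If every edge of `conv(S)` is parallel to an integer vector of 1-norm at most `e`,
then every edge of the projection `conv(WS)` is parallel to some vector in
`{-q,…,q}^d` where `q = e·‖W‖_∞`. -/
theorem stmt_3 (n d e : ℕ) (S : Set (Fin n → ℤ)) (hSfin : S.Finite)
    (W : Matrix (Fin d) (Fin n) ℤ)
    (Sr : Set (Fin n → ℝ)) (hSr : Sr = (fun x : Fin n → ℤ => fun j => (x j : ℝ)) '' S)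
    (hedge : ∀ u v : Fin n → ℝ, IsEdgeOf (convexHull ℝ Sr) u v →
      ∃ w : Fin n → ℤ, (∑ j, (w j).natAbs) ≤ e ∧ ParallelToInt u v w)
    (q : ℕ) (hq : q = e * Finset.univ.sup fun p : Fin d × Fin n => (W p.1 p.2).natAbs) :
    ∀ u v : Fin d → ℝ,
      IsEdgeOf (convexHull ℝ ((W.map (Int.cast : ℤ → ℝ)).mulVec '' Sr)) u v →
      ∃ z : Fin d → ℤ, (∀ i, (z i).natAbs ≤ q) ∧ ParallelToInt u v z := by
  rintro u v ⟨huv, hext⟩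
  set f := (W.map (Int.cast : ℤ → ℝ)).mulVecLin
  obtain ⟨a, b, hab, hfab, ha, hb⟩ :=
    exists_isExtreme_segment_of_isExtreme_image (hSr ▸ hSfin.image _) f hext huv
  obtain ⟨w, hw, c, hc, habw⟩ := hedge a b ⟨fun h => hfab (h ▸ rfl), hab⟩
  obtain ⟨r, hr, huvr⟩ := exists_ne_zero_sub_eq_smul_of_mem_segment ha hb hfab
  refine ⟨W *ᵥ w, fun i => ?_, r * c, mul_ne_zero hr hc, ?_⟩
  · rw [hq, mul_comm e]
    exact (W.natAbs_mulVec_le w i).trans (Nat.mul_le_mul_left _ hw)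
  · rw [huvr, ← map_sub, habw, map_smul, smul_smul]
    congr 1
    ext i
    exact (RingHom.map_mulVec (Int.castRingHom ℝ) W w i).symm
end

section
/- Let S ⊂ {0,1}ⁿ be the set of indicator vectors of bases of a matroid M on ground set {1,…,n}. Then every edge of the matroid base polytope conv(S) is parallel to a vector of the form 𝟙_i − 𝟙_j for some i ≠ j, where 𝟙_i is the i-th standard unit vector of ℝⁿ. Equivalently, if [u,v] is an edge of conv(S) then the bases B_u = supp(u) and B_v = supp(v) satisfy |B_u Δ B_v| = 2. -/
/-!
Let `[𝟙_B, 𝟙_B']` be an edge of the base polytope. Its endpoints are extreme points of the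
polytope, hence base indicators. If `B \ B'` contained two elements `e ≠ e'`, symmetric basis
exchange would give `f ∈ B' \ B` with `B₁ = B - e + f` and `B₂ = B' - f + e` both bases. Then
`𝟙_B + 𝟙_B' = 𝟙_B₁ + 𝟙_B₂`, so the midpoint of the edge lies in the open segment `(𝟙_B₁, 𝟙_B₂)`,
which forces `𝟙_B₁` onto the edge. But a `0/1`-vector is an extreme point of the unit cube, so
it lies on a segment between two `0/1`-vectors only as an endpoint, while `B₁ ≠ B` (it contains
`f`) and `B₁ ≠ B'` (it contains `e'`). Hence `|B \ B'| = |B' \ B| = 1`.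
-/

open Set

section Convex

variable {𝕜 E : Type*} [Field 𝕜] [LinearOrder 𝕜] [IsStrictOrderedRing 𝕜] [AddCommGroup E]
  [Module 𝕜 E] {A : Set E} {u v x y : E}

theorem left_mem_extremePoints_segment [Module.IsTorsionFree 𝕜 E] (u v : E) :
    u ∈ (segment 𝕜 u v).extremePoints 𝕜 := by
  refine mem_extremePoints_iff_left.2 ⟨left_mem_segment 𝕜 u v, ?_⟩
  rw [segment_eq_image']
  rintro _ ⟨s, ⟨hs, -⟩, rfl⟩ _ ⟨t, ⟨ht, -⟩, rfl⟩ ⟨a, b, ha, hb, hab, h⟩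
  beta_reduce at h ⊢
  have hw : (a * s + b * t) • (v - u) = 0 := by
    linear_combination (norm := module) h - hab • u
  rcases smul_eq_zero.1 hw with hst | hvu
  · rw [show s = 0 by nlinarith [mul_nonneg ha.le hs, mul_nonneg hb.le ht], zero_smul, add_zero]
  · rw [hvu, smul_zero, add_zero]

theorem IsExtreme.left_mem_of_convexHull [Module.IsTorsionFree 𝕜 E]
    (h : IsExtreme 𝕜 (convexHull 𝕜 A) (segment 𝕜 u v)) : u ∈ A :=
  extremePoints_convexHull_subset
    (h.extremePoints_subset_extremePoints (left_mem_extremePoints_segment u v))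

theorem IsExtreme.mem_segment_of_add_eq (h : IsExtreme 𝕜 A (segment 𝕜 u v)) (hx : x ∈ A)
    (hy : y ∈ A) (hxy : x + y = u + v) : x ∈ segment 𝕜 u v := by
  have hmid : (2⁻¹ : 𝕜) • u + (2⁻¹ : 𝕜) • v ∈ segment 𝕜 u v :=
    ⟨2⁻¹, 2⁻¹, by norm_num, by norm_num, by norm_num, rfl⟩
  refine h.2 hx hy hmid ⟨2⁻¹, 2⁻¹, by norm_num, by norm_num, by norm_num, ?_⟩
  rw [← smul_add, hxy, smul_add]

end Convex

namespace Set

variable {ι : Type*} {B B' C : Set ι}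

theorem indicator_one_mem_extremePoints_unitCube (C : Set ι) :
    C.indicator (1 : ι → ℝ) ∈ (univ.pi fun _ ↦ Icc (0 : ℝ) 1).extremePoints ℝ := by
  rw [extremePoints_pi]
  intro i _
  rw [extremePoints_Icc zero_le_one]
  by_cases hi : i ∈ C <;> simp [hi]

theorem eq_or_eq_of_indicator_one_mem_segment
    (h : C.indicator (1 : ι → ℝ) ∈ segment ℝ (B.indicator 1) (B'.indicator 1)) :
    B = C ∨ B' = C :=
  ((mem_extremePoints_iff_forall_segment.1 (indicator_one_mem_extremePoints_unitCube C)).2 _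
    (extremePoints_subset (indicator_one_mem_extremePoints_unitCube B)) _
    (extremePoints_subset (indicator_one_mem_extremePoints_unitCube B')) h).imp
    (indicator_one_inj ℝ) (indicator_one_inj ℝ)

theorem indicator_one_sub_indicator_one_of_sdiff_eq_singleton [DecidableEq ι] {i j : ι}
    (hi : B \ B' = {i}) (hj : B' \ B = {j}) :
    B.indicator (1 : ι → ℝ) - B'.indicator 1 = Pi.single i 1 - Pi.single j 1 := by
  have h (s t : Set ι) :
      (s \ t).indicator (1 : ι → ℝ) = s.indicator 1 - (s ∩ t).indicator 1 := by
    rw [← indicator_sdiff inter_subset_left, sdiff_self_inter]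
  calc B.indicator 1 - B'.indicator 1
      _ = (B \ B').indicator 1 - (B' \ B).indicator (1 : ι → ℝ) := by
        rw [h, h, inter_comm]; abel
      _ = Pi.single i 1 - Pi.single j 1 := by
        rw [hi, hj, indicator_singleton, indicator_singleton]; rfl

end Set

namespace Matroid

variable {α : Type*} {M : Matroid α} {B B' : Set α} {e : α} {S : Set (α → ℝ)}

theorem IsBase.exists_symm_exchange (hB : M.IsBase B) (hB' : M.IsBase B') (he : e ∈ B \ B') :
    ∃ f ∈ B' \ B, M.IsBase (insert f (B \ {e})) ∧ M.IsBase (insert e (B' \ {f})) := by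
  have heE : e ∈ M.E := hB.subset_ground he.1
  have hC : M.IsCircuit (M.fundCircuit e B') := hB'.fundCircuit_isCircuit heE he.2
  have hK : M.IsCocircuit (M.E \ M.closure (B \ {e})) :=
    hB.compl_closure_sdiff_singleton_isCocircuit he.1
  have heK : e ∈ M.E \ M.closure (B \ {e}) := ⟨heE, hB.indep.notMem_closure_sdiff_of_mem he.1⟩
  -- a circuit and a cocircuit sharing `e` share a second element, since they never meet in one
  obtain ⟨f, ⟨hfC, hfE, hfcl⟩, hfe⟩ :=
    (hC.isCocircuit_inter_nontrivial hK ⟨e, M.mem_fundCircuit e B', heK⟩).exists_ne e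
  have hfB' : f ∈ B' := (M.fundCircuit_subset_insert e B' hfC).resolve_left hfe
  have hfB : f ∉ B := fun hfB ↦
    hfcl (M.subset_closure _ (sdiff_subset.trans hB.subset_ground) ⟨hfB, hfe⟩)
  refine ⟨f, ⟨hfB', hfB⟩, hB.exchange_base_of_notMem_closure he.1 hfcl hfE, ?_⟩
  have hind := (hB'.indep.mem_fundCircuit_iff (hB'.closure_eq ▸ heE) he.2).1 hfC
  rw [insert_sdiff_singleton_comm hfe.symm]
  exact hB'.exchange_isBase_of_indep' hfB' he.2 hind

theorem IsBase.sdiff_subsingleton_of_isExtreme_segment (hB : M.IsBase B) (hB' : M.IsBase B')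
    (hS : ∀ ⦃B⦄, M.IsBase B → B.indicator 1 ∈ S)
    (hext : IsExtreme ℝ (convexHull ℝ S) (segment ℝ (B.indicator 1) (B'.indicator 1))) :
    (B \ B').Subsingleton := by
  intro e he e' he'
  by_contra hee'
  obtain ⟨f, hf, hB₁, hB₂⟩ := hB.exists_symm_exchange hB' he
  have hsum : (insert f (B \ {e})).indicator 1 + (insert e (B' \ {f})).indicator 1 =
      B.indicator (1 : α → ℝ) + B'.indicator 1 := by
    classical
    have hef : e ≠ f := ne_of_mem_of_not_mem he.1 hf.2
    ext k
    by_cases hke : k = e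
    · subst hke; simp [he.1, he.2, hef]
    by_cases hkf : k = f
    · subst hkf; simp [hf.1, hf.2, hke]
    simp [indicator_apply, hke, hkf]
  have hB₁seg := hext.mem_segment_of_add_eq (subset_convexHull ℝ S (hS hB₁))
    (subset_convexHull ℝ S (hS hB₂)) hsum
  rcases eq_or_eq_of_indicator_one_mem_segment hB₁seg with h | h
  · exact hf.2 (h ▸ mem_insert f _)
  · exact he'.2 (h ▸ mem_insert_of_mem f ⟨he'.1, Ne.symm hee'⟩)

theorem IsBase.exists_sdiff_eq_singleton_of_isExtreme_segment (hB : M.IsBase B)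
    (hB' : M.IsBase B') (hne : B ≠ B') (hS : ∀ ⦃B⦄, M.IsBase B → B.indicator 1 ∈ S)
    (hext : IsExtreme ℝ (convexHull ℝ S) (segment ℝ (B.indicator 1) (B'.indicator 1))) :
    ∃ i, B \ B' = {i} :=
  exists_eq_singleton_iff_nonempty_subsingleton.2
    ⟨nonempty_of_not_subset fun h ↦ hne (hB.eq_of_subset_isBase hB' h),
      hB.sdiff_subsingleton_of_isExtreme_segment hB' hS hext⟩

end Matroid

theorem stmt_5_general (n : ℕ) (M : Matroid (Fin n))
    (S : Set (Fin n → ℝ))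
    (hS : S = {x | ∃ B : Set (Fin n), M.IsBase B ∧ x = B.indicator fun _ => (1 : ℝ)}) :
    ∀ u v : Fin n → ℝ, IsEdgeOf (convexHull ℝ S) u v →
      (∃ (i j : Fin n) (c : ℝ), i ≠ j ∧ c ≠ 0 ∧
        u - v = c • (Pi.single i (1 : ℝ) - Pi.single j (1 : ℝ))) ∧
      u ∈ S ∧ v ∈ S ∧
      (symmDiff {i | u i ≠ 0} {i | v i ≠ 0}).ncard = 2 := by
  rintro u v ⟨huv, hext⟩
  have hext' : IsExtreme ℝ (convexHull ℝ S) (segment ℝ v u) := segment_symm ℝ u v ▸ hext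
  have huS : u ∈ S := hext.left_mem_of_convexHull
  have hvS : v ∈ S := hext'.left_mem_of_convexHull
  have hSB : ∀ ⦃B⦄, M.IsBase B → B.indicator 1 ∈ S := fun B hB ↦ hS ▸ ⟨B, hB, rfl⟩
  obtain ⟨B, hB, rfl⟩ := hS ▸ huS
  obtain ⟨B', hB', rfl⟩ := hS ▸ hvS
  have hne : B ≠ B' := fun h ↦ huv (h ▸ rfl)
  obtain ⟨i, hi⟩ := hB.exists_sdiff_eq_singleton_of_isExtreme_segment hB' hne hSB hext
  obtain ⟨j, hj⟩ := hB'.exists_sdiff_eq_singleton_of_isExtreme_segment hB hne.symm hSB hext'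
  have hiB : i ∈ B := (hi ▸ mem_singleton i : i ∈ B \ B').1
  have hjB : j ∉ B := (hj ▸ mem_singleton j : j ∈ B' \ B).2
  have hij : i ≠ j := ne_of_mem_of_not_mem hiB hjB
  have hsupp (C : Set (Fin n)) : {k | C.indicator (fun _ ↦ (1 : ℝ)) k ≠ 0} = C := by simp
  refine ⟨⟨i, j, 1, hij, one_ne_zero, ?_⟩, huS, hvS, ?_⟩
  · rw [one_smul]
    exact indicator_one_sub_indicator_one_of_sdiff_eq_singleton hi hj
  · rw [hsupp, hsupp, Set.symmDiff_def, hi, hj, singleton_union, ncard_pair hij]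

/-- Every edge of a matroid base polytope is parallel to `𝟙_i - 𝟙_j` for some `i ≠ j`;
equivalently, the bases indicated by the two endpoints of an edge have symmetric
difference of size two. -/
theorem stmt_5 (n : ℕ) (M : Matroid (Fin n)) (hE : M.E = Set.univ)
    (S : Set (Fin n → ℝ))
    (hS : S = {x | ∃ B : Set (Fin n), M.IsBase B ∧ x = B.indicator fun _ => (1 : ℝ)}) :
    ∀ u v : Fin n → ℝ, IsEdgeOf (convexHull ℝ S) u v →
      (∃ (i j : Fin n) (c : ℝ), i ≠ j ∧ c ≠ 0 ∧
        u - v = c • (Pi.single i (1 : ℝ) - Pi.single j (1 : ℝ))) ∧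
      u ∈ S ∧ v ∈ S ∧
      (symmDiff {i | u i ≠ 0} {i | v i ≠ 0}).ncard = 2 :=
  stmt_5_general n M S hS
end

section
/- Let k ≥ r ≥ 1, d ≥ 1, n = k·2^d, and let W be the d×n binary matrix whose columns consist of k copies of each vector in {0,1}^d. Let S = S^n_r ⊂ {0,1}ⁿ be the set of all 0/1-vectors with exactly r ones (the uniform matroid of rank r). Then conv(WS) = [0, r]^d, the cube of side r; in particular conv(WS) has exactly 2^d vertices. -/
/-!
Each coordinate of `W x` counts the ones of `x` among a subset of the columns, so for a 0/1-vector
`x` with `r` ones it lies in `[0, r]`. Conversely, because every column of `W` is repeated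
`k ≥ r` times, each corner `r • b` (`b ∈ {0,1}^d`) of the cube `[0, r]^d` is `W x` for the
indicator `x` of `r` copies of the column `b`. Hence `conv(WS)` is the cube, whose extreme points
are its `2^d` corners.
-/

open Finset Matrix

section Cube

variable {ι : Type*} [Finite ι] {a b : ℝ}

lemma convexHull_univ_pi_pair (hab : a ≤ b) :
    convexHull ℝ (Set.univ.pi fun _ : ι => ({a, b} : Set ℝ)) =
      Set.univ.pi fun _ => Set.Icc a b := by
  rw [convexHull_pi]
  simp only [convexHull_pair, segment_eq_Icc hab]

omit [Finite ι] in
lemma extremePoints_univ_pi_Icc (hab : a ≤ b) :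
    (Set.univ.pi fun _ : ι => Set.Icc a b).extremePoints ℝ = Set.univ.pi fun _ => {a, b} := by
  rw [extremePoints_pi]
  simp [hab]

lemma ncard_univ_pi_pair (hab : a ≠ b) :
    (Set.univ.pi fun _ : ι => ({a, b} : Set ℝ)).ncard = 2 ^ Nat.card ι := by
  rw [← Nat.card_coe_set_eq, Nat.card_congr (Equiv.Set.univPi _), Nat.card_fun,
    Nat.card_coe_set_eq, Set.ncard_pair hab]

end Cube

/-- `S^n_r`, with `n` the cardinality of `ι`, as real 0/1-vectors. -/
def uniformBases (ι : Type*) (r : ℕ) : Set (ι → ℝ) :=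
  {x | (∀ j, x j = 0 ∨ x j = 1) ∧ {j | x j = 1}.ncard = r}

section ZeroOne

variable {ι : Type*} [Fintype ι]

lemma sum_eq_ncard_of_forall_eq_zero_or_eq_one {x : ι → ℝ} (hx : ∀ j, x j = 0 ∨ x j = 1) :
    ∑ j, x j = {j | x j = 1}.ncard := by
  have : ∀ j, x j = if x j = 1 then 1 else 0 := fun j => by rcases hx j with h | h <;> simp [h]
  rw [sum_congr rfl fun j _ => this j, sum_boole, Set.ncard_eq_toFinset_card']
  simp

lemma mulVec_mem_Icc {m : Type*} {W : Matrix m ι ℝ} (hW : ∀ i j, W i j ∈ Set.Icc 0 1)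
    {x : ι → ℝ} (hx : 0 ≤ x) (i : m) : (W *ᵥ x) i ∈ Set.Icc 0 (∑ j, x j) :=
  ⟨sum_nonneg fun j _ => mul_nonneg (hW i j).1 (hx j),
    sum_le_sum fun j _ => mul_le_of_le_one_left (hx j) (hW i j).2⟩

lemma mulVec_mem_univ_pi_Icc {m : Type*} {W : Matrix m ι ℝ} (hW : ∀ i j, W i j ∈ Set.Icc 0 1)
    {r : ℕ} {x : ι → ℝ} (hx : x ∈ uniformBases ι r) :
    W *ᵥ x ∈ Set.univ.pi fun _ => Set.Icc (0 : ℝ) r := by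
  obtain ⟨h01, hcard⟩ := hx
  intro i _
  rw [← hcard, ← sum_eq_ncard_of_forall_eq_zero_or_eq_one h01]
  exact mulVec_mem_Icc hW (fun j => by rcases h01 j with h | h <;> simp [h]) i

omit [Fintype ι] in
lemma indicator_mem_uniformBases [DecidableEq ι] (T : Finset ι) :
    (fun j => if j ∈ T then (1 : ℝ) else 0) ∈ uniformBases ι T.card := by
  refine ⟨fun j => by by_cases h : j ∈ T <;> simp [h], ?_⟩
  rw [← Set.ncard_coe_finset]
  congr 1
  ext j
  by_cases h : j ∈ T <;> simp [h]

lemma mulVec_indicator_apply {m : Type*} [DecidableEq ι] (W : Matrix m ι ℝ) (T : Finset ι)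
    (i : m) :
    (W *ᵥ fun j => if j ∈ T then (1 : ℝ) else 0) i = ∑ j ∈ T, W i j := by
  simp [mulVec, dotProduct]

end ZeroOne

lemma corner_mem_mulVec_image {d k r : ℕ} (hkr : r ≤ k)
    {W : Matrix (Fin d) (Fin k × (Fin d → Bool)) ℝ}
    (hW : ∀ i c, W i c = if c.2 i then 1 else 0)
    (b : Fin d → Bool) :
    (fun i => if b i then (r : ℝ) else 0) ∈ W.mulVec '' uniformBases _ r := by
  classical
  set T : Finset (Fin k × (Fin d → Bool)) :=
    ({a : Fin k | (a : ℕ) < r} : Finset (Fin k)) ×ˢ {b}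
  have hA : #({a : Fin k | (a : ℕ) < r} : Finset (Fin k)) = r := by
    simp [Fin.card_filter_val_lt, hkr]
  have hT : T.card = r := by simp [T, hA]
  refine ⟨_, hT ▸ indicator_mem_uniformBases T, funext fun i => ?_⟩
  rw [mulVec_indicator_apply, sum_product, sum_comm, sum_singleton]
  by_cases h : b i <;> simp [hW, h, hA]

lemma univ_pi_pair_subset_mulVec_image {d k r : ℕ} (hkr : r ≤ k)
    {W : Matrix (Fin d) (Fin k × (Fin d → Bool)) ℝ}
    (hW : ∀ i c, W i c = if c.2 i then 1 else 0) :
    (Set.univ.pi fun _ : Fin d => ({0, (r : ℝ)} : Set ℝ)) ⊆ W.mulVec '' uniformBases _ r := by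
  intro y hy
  convert corner_mem_mulVec_image hkr hW (fun i => decide (y i = r)) using 1
  funext i
  by_cases h : y i = r
  · simp [h]
  · simpa [h] using hy i trivial

lemma convexHull_mulVec_image_uniformBases {d k r : ℕ} (hkr : r ≤ k)
    {W : Matrix (Fin d) (Fin k × (Fin d → Bool)) ℝ}
    (hW : ∀ i c, W i c = if c.2 i then 1 else 0) :
    convexHull ℝ (W.mulVec '' uniformBases _ r) = Set.univ.pi fun _ => Set.Icc (0 : ℝ) r := by
  have hW01 : ∀ i c, W i c ∈ Set.Icc (0 : ℝ) 1 := fun i c => by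
    rw [hW]; split_ifs <;> simp
  refine (convexHull_min ?_ (convex_pi fun _ _ => convex_Icc 0 _)).antisymm ?_
  · exact Set.image_subset_iff.2 fun _ => mulVec_mem_univ_pi_Icc hW01
  · rw [← convexHull_univ_pi_pair r.cast_nonneg]
    exact convexHull_mono (univ_pi_pair_subset_mulVec_image hkr hW)

theorem stmt_8_general (d k r : ℕ) (hr : 1 ≤ r) (hkr : r ≤ k)
    (W : Matrix (Fin d) (Fin k × (Fin d → Bool)) ℝ)
    (hW : ∀ i c, W i c = if c.2 i then 1 else 0)
    (S : Set ((Fin k × (Fin d → Bool)) → ℝ))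
    (hS : S = {x | (∀ j, x j = 0 ∨ x j = 1) ∧ {j | x j = 1}.ncard = r}) :
    convexHull ℝ (W.mulVec '' S) = {y : Fin d → ℝ | ∀ i, y i ∈ Set.Icc (0 : ℝ) r} ∧
    (Set.extremePoints ℝ (convexHull ℝ (W.mulVec '' S))).ncard = 2 ^ d := by
  change S = uniformBases _ r at hS
  subst hS
  have hcube : {y : Fin d → ℝ | ∀ i, y i ∈ Set.Icc (0 : ℝ) r} =
      Set.univ.pi fun _ => Set.Icc (0 : ℝ) r := by
    ext; simp only [Set.mem_ofPred_eq, Set.mem_pi, Set.mem_univ, true_imp_iff]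
  rw [hcube, convexHull_mulVec_image_uniformBases hkr hW, extremePoints_univ_pi_Icc r.cast_nonneg,
    ncard_univ_pi_pair (Nat.cast_pos.2 hr).ne, Nat.card_fin]
  exact ⟨rfl, rfl⟩

/-- For `k ≥ r ≥ 1`, the projection of the uniform matroid `S^n_r` (`n = k·2^d`) by the
binary matrix `W^k_d` whose columns consist of `k` copies of each vector in `{0,1}^d`
satisfies `conv(WS) = [0,r]^d`; in particular it has exactly `2^d` vertices.
Columns are indexed by `Fin k × (Fin d → Bool)`. -/
theorem stmt_8 (d k r : ℕ) (hd : 1 ≤ d) (hr : 1 ≤ r) (hkr : r ≤ k)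
    (W : Matrix (Fin d) (Fin k × (Fin d → Bool)) ℝ)
    (hW : ∀ i c, W i c = if c.2 i then 1 else 0)
    (S : Set ((Fin k × (Fin d → Bool)) → ℝ))
    (hS : S = {x | (∀ j, x j = 0 ∨ x j = 1) ∧ {j | x j = 1}.ncard = r}) :
    convexHull ℝ (W.mulVec '' S) = {y : Fin d → ℝ | ∀ i, y i ∈ Set.Icc (0 : ℝ) r} ∧
    (Set.extremePoints ℝ (convexHull ℝ (W.mulVec '' S))).ncard = 2 ^ d :=
  stmt_8_general d k r hr hkr W hW S hS
end

section
/- Let d ≥ 1, n = 2^d, W the d×n binary matrix whose columns are all vectors of {0,1}^d, and S = S^n_2 the set of 0/1-vectors with exactly two ones. Then the set of vertices (extreme points) of conv(WS) equals V_1, the set of vectors in {0,1,2}^d with exactly one coordinate equal to 1. Hence conv(WS) has exactly d·2^{d-1} vertices. -/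
/-!
Through `W`, the 0/1-vectors with two ones are mapped onto `WS = {u + v : u ≠ v ∈ {0,1}^d}`,
the vectors of `{0,1,2}^d` with some coordinate equal to `1`. A point of `WS` with two
coordinates equal to `1` is the midpoint of the two points of `WS` obtained by replacing one of
them by `0` and by `2`, so it is not extreme. Conversely, each `v ∈ V₁` is the unique maximizer
over `WS` of the linear functional `y ↦ (v - 1) ⬝ᵥ y`, hence a vertex. Finally, a point of
`V₁` is determined by the position of its `1` and a `0/2`-pattern on the other `d - 1`
coordinates.
-/

section ExtremePoints

variable {𝕜 E : Type*} [Field 𝕜] [LinearOrder 𝕜] [IsStrictOrderedRing 𝕜]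
  [AddCommGroup E] [Module 𝕜 E]

lemma convex_insert_halfSpace_lt (l : E →ₗ[𝕜] 𝕜) (v : E) :
    Convex 𝕜 (insert v {y | l y < l v}) := by
  rw [convex_iff_forall_pos]
  rintro x (rfl | hx) y (rfl | hy) a b ha hb hab
  · exact Or.inl (Convex.combo_self hab _)
  all_goals
    right
    simp only [Set.mem_ofPred_eq, map_add, map_smul, smul_eq_mul] at *
    obtain rfl : a = 1 - b := by linarith
  · linarith [mul_lt_mul_of_pos_left hy hb]
  · linarith [mul_lt_mul_of_pos_left hx ha]
  · linarith [mul_lt_mul_of_pos_left hx ha, mul_lt_mul_of_pos_left hy hb]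

lemma mem_extremePoints_convexHull_of_forall_lt {s : Set E} {v : E} (l : E →ₗ[𝕜] 𝕜)
    (hv : v ∈ s) (hlt : ∀ y ∈ s, y ≠ v → l y < l v) :
    v ∈ (convexHull 𝕜 s).extremePoints 𝕜 := by
  have hsub : convexHull 𝕜 s ⊆ insert v {y | l y < l v} :=
    convexHull_min (fun y hy => (eq_or_ne y v).imp id (hlt y hy))
      (convex_insert_halfSpace_lt l v)
  have hext : v ∈ (insert v {y | l y < l v}).extremePoints 𝕜 := by
    rw [(convex_insert_halfSpace_lt l v).mem_extremePoints_iff_convex_sdiff,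
      Set.insert_sdiff_self_of_notMem (show v ∉ {y | l y < l v} from lt_irrefl _)]
    exact ⟨Set.mem_insert _ _, convex_halfSpace_lt l.isLinear _⟩
  exact inter_extremePoints_subset_extremePoints_of_subset hsub
    ⟨subset_convexHull 𝕜 s hv, hext⟩

end ExtremePoints

section PairSums

variable {ι : Type*}

lemma pi_zeroOne_ncard_two_iff [DecidableEq ι] {x : ι → ℝ} :
    ((∀ j, x j = 0 ∨ x j = 1) ∧ {j | x j = 1}.ncard = 2) ↔
      ∃ a b, a ≠ b ∧ x = Pi.single a 1 + Pi.single b 1 := by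
  constructor
  · rintro ⟨hx01, hx2⟩
    obtain ⟨a, b, hab, hset⟩ := Set.ncard_eq_two.1 hx2
    have hone : ∀ j, x j = 1 ↔ j = a ∨ j = b := fun j => by simpa using Set.ext_iff.1 hset j
    refine ⟨a, b, hab, funext fun j => ?_⟩
    rcases hx01 j with h | h
    · obtain ⟨hja, hjb⟩ : j ≠ a ∧ j ≠ b := by
        rw [← not_or, ← hone, h]; norm_num
      simp [hja, hjb, h]
    · rcases (hone j).1 h with rfl | rfl <;> simp [hab, hab.symm, h]
  · rintro ⟨a, b, hab, rfl⟩
    refine ⟨fun j => ?_, ?_⟩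
    · by_cases hja : j = a <;> by_cases hjb : j = b <;> simp_all
    · convert Set.ncard_pair hab
      ext j
      by_cases hja : j = a <;> by_cases hjb : j = b <;> simp_all

def boolVec (u : ι → Bool) : ι → ℝ := fun i => if u i then 1 else 0

def pairSums (ι : Type*) : Set (ι → ℝ) :=
  {w | ∃ u v : ι → Bool, u ≠ v ∧ w = boolVec u + boolVec v}

lemma mem_pairSums_iff {w : ι → ℝ} :
    w ∈ pairSums ι ↔ (∀ i, w i = 0 ∨ w i = 1 ∨ w i = 2) ∧ ∃ i, w i = 1 := by
  constructor
  · rintro ⟨u, v, huv, rfl⟩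
    obtain ⟨i, hi⟩ := Function.ne_iff.1 huv
    refine ⟨fun j => ?_, i, ?_⟩
    · cases hu : u j <;> cases hv : v j <;> norm_num [boolVec, hu, hv]
    · cases hu : u i <;> cases hv : v i <;> simp_all [boolVec]
  · rintro ⟨hw, i, hi⟩
    refine ⟨fun j => decide (w j = 2), fun j => decide (w j ≠ 0), fun h => ?_,
      funext fun j => ?_⟩
    · simpa [hi] using congrFun h i
    · rcases hw j with h | h | h <;> norm_num [boolVec, h]

lemma image_mulVec_eq_pairSums [Fintype ι] [DecidableEq ι] {W : Matrix ι (ι → Bool) ℝ}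
    (hW : ∀ i c, W i c = if c i then 1 else 0) :
    W.mulVec '' {x | (∀ j, x j = 0 ∨ x j = 1) ∧ {j | x j = 1}.ncard = 2} = pairSums ι := by
  have hcol : ∀ c, W.mulVec (Pi.single c 1) = boolVec c := fun c => by
    rw [Matrix.mulVec_single_one]; ext i; exact hW i c
  ext w
  simp only [Set.mem_image, Set.mem_ofPred_eq, pi_zeroOne_ncard_two_iff]
  constructor
  · rintro ⟨x, ⟨a, b, hab, rfl⟩, rfl⟩
    exact ⟨a, b, hab, by rw [Matrix.mulVec_add, hcol, hcol]⟩
  · rintro ⟨a, b, hab, rfl⟩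
    exact ⟨_, ⟨a, b, hab, rfl⟩, by rw [Matrix.mulVec_add, hcol, hcol]⟩

def ternaryUniqueOne (ι : Type*) : Set (ι → ℝ) :=
  {v | (∀ i, v i = 0 ∨ v i = 1 ∨ v i = 2) ∧ {i | v i = 1}.ncard = 1}

lemma sub_one_mul_le_of_ternary {a b : ℝ} (ha : a = 0 ∨ a = 1 ∨ a = 2)
    (hb : b = 0 ∨ b = 1 ∨ b = 2) : (a - 1) * b ≤ (a - 1) * a := by
  rcases ha with rfl | rfl | rfl <;> rcases hb with rfl | rfl | rfl <;> norm_num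

lemma sub_one_mul_lt_of_ternary {a b : ℝ} (ha : a = 0 ∨ a = 1 ∨ a = 2)
    (hb : b = 0 ∨ b = 1 ∨ b = 2) (ha1 : a ≠ 1) (hba : b ≠ a) :
    (a - 1) * b < (a - 1) * a := by
  rcases ha with rfl | rfl | rfl <;> rcases hb with rfl | rfl | rfl <;> norm_num at *

lemma extremePoints_convexHull_pairSums_subset [DecidableEq ι] :
    (convexHull ℝ (pairSums ι)).extremePoints ℝ ⊆ ternaryUniqueOne ι := by
  intro w hw
  obtain ⟨hw012, i, hi⟩ := mem_pairSums_iff.1 (extremePoints_convexHull_subset hw)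
  refine ⟨hw012, Set.ncard_eq_one.2
    ⟨i, Set.eq_singleton_iff_unique_mem.2 ⟨hi, fun j (hj : w j = 1) => ?_⟩⟩⟩
  by_contra hji
  have hupdate : ∀ t : ℝ, (t = 0 ∨ t = 1 ∨ t = 2) →
      Function.update w j t ∈ convexHull ℝ (pairSums ι) := by
    intro t ht
    refine subset_convexHull ℝ _ (mem_pairSums_iff.2 ⟨fun k => ?_, i, ?_⟩)
    · rcases eq_or_ne k j with rfl | hk
      · simpa using ht
      · rw [Function.update_of_ne hk]
        exact hw012 k
    · rwa [Function.update_of_ne (Ne.symm hji)]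
  have hmid : w ∈ openSegment ℝ (Function.update w j 0) (Function.update w j 2) := by
    refine ⟨1 / 2, 1 / 2, by norm_num, by norm_num, by norm_num, funext fun k => ?_⟩
    rcases eq_or_ne k j with rfl | hk
    · norm_num [hj]
    · simp only [Pi.add_apply, Pi.smul_apply, Function.update_of_ne hk, smul_eq_mul]
      ring
  have := congrFun (hw.2 (hupdate 0 (by norm_num)) (hupdate 2 (by norm_num)) hmid) j
  norm_num [hj] at this

lemma ternaryUniqueOne_subset_extremePoints [Fintype ι] :
    ternaryUniqueOne ι ⊆ (convexHull ℝ (pairSums ι)).extremePoints ℝ := by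
  rintro v ⟨hv012, hv1⟩
  obtain ⟨i, hi⟩ := Set.ncard_eq_one.1 hv1
  have hone : ∀ j, v j = 1 ↔ j = i := fun j => Set.ext_iff.1 hi j
  refine mem_extremePoints_convexHull_of_forall_lt (dotProductBilin ℝ ℝ (v - 1))
    (mem_pairSums_iff.2 ⟨hv012, i, (hone i).2 rfl⟩) fun y hy hyv => ?_
  obtain ⟨hy012, k, hk⟩ := mem_pairSums_iff.1 hy
  -- `y` and `v` differ off `i`: at the `1` of `y` if that is not `i`, else wherever they differ
  obtain ⟨j, hvj, hyj⟩ : ∃ j, v j ≠ 1 ∧ y j ≠ v j := by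
    by_cases hki : k = i
    · obtain ⟨j, hj⟩ := Function.ne_iff.1 hyv
      refine ⟨j, fun hvj => hj ?_, hj⟩
      rw [hvj, (hone j).1 hvj, ← hki, hk]
    · have hvk : v k ≠ 1 := fun h => hki ((hone k).1 h)
      exact ⟨k, hvk, hk ▸ hvk.symm⟩
  simp only [dotProductBilin_apply_apply, dotProduct, Pi.sub_apply, Pi.one_apply]
  exact Finset.sum_lt_sum (fun j _ => sub_one_mul_le_of_ternary (hv012 j) (hy012 j))
    ⟨j, Finset.mem_univ _, sub_one_mul_lt_of_ternary (hv012 j) (hy012 j) hvj hyj⟩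

lemma extremePoints_convexHull_pairSums [Fintype ι] [DecidableEq ι] :
    (convexHull ℝ (pairSums ι)).extremePoints ℝ = ternaryUniqueOne ι :=
  extremePoints_convexHull_pairSums_subset.antisymm ternaryUniqueOne_subset_extremePoints

def withOneAt [DecidableEq ι] (i : ι) (u : {j // j ≠ i} → Bool) : ι → ℝ :=
  fun j => if h : j = i then 1 else if u ⟨j, h⟩ then 2 else 0

lemma withOneAt_eq_one_iff [DecidableEq ι] {i j : ι} {u : {j // j ≠ i} → Bool} :
    withOneAt i u j = 1 ↔ j = i := by
  unfold withOneAt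
  split_ifs <;> norm_num [*]

lemma withOneAt_injective [DecidableEq ι] :
    Function.Injective fun p : Σ i : ι, {j // j ≠ i} → Bool => withOneAt p.1 p.2 := by
  rintro ⟨i, u⟩ ⟨i', u'⟩ h
  have hi : withOneAt i' u' i = 1 := (congrFun h i).symm.trans (withOneAt_eq_one_iff.2 rfl)
  obtain rfl := withOneAt_eq_one_iff.1 hi
  congr
  funext j
  have := congrFun h j.1
  simp only [withOneAt, j.2, dite_false] at this
  cases hu : u j <;> cases hu' : u' j <;> simp [hu, hu'] at this ⊢

lemma range_withOneAt [DecidableEq ι] :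
    Set.range (fun p : Σ i : ι, {j // j ≠ i} → Bool => withOneAt p.1 p.2) =
      ternaryUniqueOne ι := by
  ext v
  constructor
  · rintro ⟨⟨i, u⟩, rfl⟩
    refine ⟨fun j => ?_, Set.ncard_eq_one.2 ⟨i, Set.ext fun j => withOneAt_eq_one_iff⟩⟩
    dsimp only [withOneAt]
    split_ifs <;> norm_num
  · rintro ⟨hv012, hv1⟩
    obtain ⟨i, hi⟩ := Set.ncard_eq_one.1 hv1
    have hone : ∀ j, v j = 1 ↔ j = i := fun j => Set.ext_iff.1 hi j
    refine ⟨⟨i, fun j => decide (v j = 2)⟩, funext fun j => ?_⟩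
    dsimp only [withOneAt]
    split_ifs with h
    · exact ((hone j).2 h).symm
    · rcases hv012 j with h' | h' | h' <;> simp_all
    · rcases hv012 j with h' | h' | h' <;> simp_all

lemma ncard_ternaryUniqueOne [Fintype ι] :
    (ternaryUniqueOne ι).ncard = Fintype.card ι * 2 ^ (Fintype.card ι - 1) := by
  classical
  rw [← range_withOneAt, Set.ncard_range_of_injective withOneAt_injective,
    Nat.card_eq_fintype_card, Fintype.card_sigma]
  simp [Fintype.card_subtype_compl]

end PairSums

theorem stmt_10_general (d : ℕ)
    (W : Matrix (Fin d) (Fin d → Bool) ℝ)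
    (hW : ∀ i c, W i c = if c i then 1 else 0)
    (S : Set ((Fin d → Bool) → ℝ))
    (hS : S = {x | (∀ j, x j = 0 ∨ x j = 1) ∧ {j | x j = 1}.ncard = 2}) :
    Set.extremePoints ℝ (convexHull ℝ (W.mulVec '' S)) =
      {v : Fin d → ℝ | (∀ i, v i = 0 ∨ v i = 1 ∨ v i = 2) ∧ {i | v i = 1}.ncard = 1} ∧
    (Set.extremePoints ℝ (convexHull ℝ (W.mulVec '' S))).ncard = d * 2 ^ (d - 1) := by
  have hext : (convexHull ℝ (W.mulVec '' S)).extremePoints ℝ = ternaryUniqueOne (Fin d) := by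
    rw [hS, image_mulVec_eq_pairSums hW, extremePoints_convexHull_pairSums]
  refine ⟨hext, ?_⟩
  rw [hext, ncard_ternaryUniqueOne, Fintype.card_fin]

/-- For `W^1_d` the `d × 2^d` binary matrix whose columns are all vectors of `{0,1}^d`
and `S = S^{2^d}_2` the 0/1-vectors with exactly two ones, the vertex set of
`conv(WS)` is `V₁`, the set of vectors in `{0,1,2}^d` with exactly one coordinate
equal to `1`; hence there are exactly `d·2^{d-1}` vertices. -/
theorem stmt_10 (d : ℕ) (hd : 1 ≤ d)
    (W : Matrix (Fin d) (Fin d → Bool) ℝ)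
    (hW : ∀ i c, W i c = if c i then 1 else 0)
    (S : Set ((Fin d → Bool) → ℝ))
    (hS : S = {x | (∀ j, x j = 0 ∨ x j = 1) ∧ {j | x j = 1}.ncard = 2}) :
    Set.extremePoints ℝ (convexHull ℝ (W.mulVec '' S)) =
      {v : Fin d → ℝ | (∀ i, v i = 0 ∨ v i = 1 ∨ v i = 2) ∧ {i | v i = 1}.ncard = 1} ∧
    (Set.extremePoints ℝ (convexHull ℝ (W.mulVec '' S))).ncard = d * 2 ^ (d - 1) :=
  stmt_10_general d W hW S hS
end

section
/- Let A be an integer m×n matrix and let S = {x ∈ ℤⁿ : Ax = b, l ≤ x ≤ u} be nonempty and finite, for some b ∈ ℤ^m and bounds l, u ∈ ℤⁿ. Then every edge of conv(S) is parallel to some element of the Graver basis 𝒢(A); consequently the edge complexity of S satisfies e(S) ≤ max{‖g‖₁ : g ∈ 𝒢(A)}. -/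
/-- The conformal (componentwise sign-compatible domination) partial order `x ⊑ y`. -/
def Conforms {n : ℕ} (x y : Fin n → ℤ) : Prop :=
  ∀ i, 0 ≤ x i * y i ∧ |x i| ≤ |y i|

/-- The Graver basis of an integer matrix: the `⊑`-minimal nonzero integer
vectors in its kernel. -/
def GraverBasis {m n : ℕ} (A : Matrix (Fin m) (Fin n) ℤ) : Set (Fin n → ℤ) :=
  {x | x ≠ 0 ∧ A.mulVec x = 0 ∧
    ∀ y : Fin n → ℤ, y ≠ 0 → A.mulVec y = 0 → Conforms y x → y = x}

/-! Let `[p, q]` be an edge of `conv S`. Its endpoints are vertices, hence points `x, z ∈ S`, and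
`z - x` is a nonzero vector of `ker A`, so some `g ∈ 𝒢(A)` is conformal to it. Conformality keeps
`x + g` and `z - g = x + ((z - x) - g)` between `x` and `z` coordinatewise, so both lie in `S`.
Their sum is `p + q`, so the midpoint of the edge lies in the open segment between them, and
extremality of the edge puts `x + g` on it: `g` is a nonzero multiple of `q - p`. -/

lemma Int.mul_nonneg_and_abs_le_iff {a b : ℤ} :
    0 ≤ a * b ∧ |a| ≤ |b| ↔ 0 ≤ a ∧ a ≤ b ∨ b ≤ a ∧ a ≤ 0 := by
  rw [mul_nonneg_iff]
  grind

namespace Conforms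

variable {n : ℕ} {x y z : Fin n → ℤ}

lemma iff_between : Conforms x y ↔ ∀ i, 0 ≤ x i ∧ x i ≤ y i ∨ y i ≤ x i ∧ x i ≤ 0 :=
  forall_congr' fun _ => Int.mul_nonneg_and_abs_le_iff

lemma refl (x : Fin n → ℤ) : Conforms x x := iff_between.2 fun i => by omega

lemma trans (hxy : Conforms x y) (hyz : Conforms y z) : Conforms x z := by
  rw [iff_between] at *
  intro i
  have := hxy i
  have := hyz i
  omega

lemma sub_left (h : Conforms x y) : Conforms (y - x) y := by
  rw [iff_between] at *
  intro i
  have := h i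
  simp only [Pi.sub_apply]
  omega

lemma natAbs_le (h : Conforms x y) (i : Fin n) : (x i).natAbs ≤ (y i).natAbs := by
  have := iff_between.1 h i
  omega

lemma eq_of_sum_natAbs_le (h : Conforms x y)
    (hsum : ∑ i, (y i).natAbs ≤ ∑ i, (x i).natAbs) : x = y := by
  have habs := (Finset.sum_eq_sum_iff_of_le fun i _ => h.natAbs_le i).1
    (le_antisymm (Finset.sum_le_sum fun i _ => h.natAbs_le i) hsum)
  funext i
  have := habs i (Finset.mem_univ i)
  have := iff_between.1 h i
  omega

/-- A step from `x` conformal to `z - x` stays between `x` and `z`. -/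
lemma add_mem_box {l u : Fin n → ℤ} (hx : ∀ i, l i ≤ x i ∧ x i ≤ u i)
    (hz : ∀ i, l i ≤ z i ∧ z i ≤ u i) (hy : Conforms y (z - x)) :
    ∀ i, l i ≤ (x + y) i ∧ (x + y) i ≤ u i := by
  intro i
  have := hx i
  have := hz i
  have := iff_between.1 hy i
  simp only [Pi.add_apply, Pi.sub_apply] at *
  omega

end Conforms

/-- Take a conformal kernel vector below `h` of least `1`-norm. -/
lemma exists_mem_graverBasis_conforms {m n : ℕ} (A : Matrix (Fin m) (Fin n) ℤ)
    {h : Fin n → ℤ} (h0 : h ≠ 0) (hA : A.mulVec h = 0) :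
    ∃ g ∈ GraverBasis A, Conforms g h := by
  obtain ⟨g, ⟨hg0, hgA, hgh⟩, hmin⟩ := exists_minimalFor_of_wellFoundedLT
    (fun y : Fin n → ℤ => y ≠ 0 ∧ A.mulVec y = 0 ∧ Conforms y h)
    (fun y => ∑ i, (y i).natAbs) ⟨h, h0, hA, Conforms.refl h⟩
  refine ⟨g, ⟨hg0, hgA, fun y hy0 hyA hyg => ?_⟩, hgh⟩
  have hyg_sum : ∑ i, (y i).natAbs ≤ ∑ i, (g i).natAbs :=
    Finset.sum_le_sum fun i _ => hyg.natAbs_le i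
  exact hyg.eq_of_sum_natAbs_le (hmin ⟨hy0, hyA, hyg.trans hgh⟩ hyg_sum)

def boundedFiber {m n : ℕ} (A : Matrix (Fin m) (Fin n) ℤ) (b : Fin m → ℤ) (l u : Fin n → ℤ) :
    Set (Fin n → ℤ) :=
  {x | A.mulVec x = b ∧ ∀ i, l i ≤ x i ∧ x i ≤ u i}

lemma exists_mem_graverBasis_add_mem_boundedFiber {m n : ℕ} {A : Matrix (Fin m) (Fin n) ℤ}
    {b : Fin m → ℤ} {l u x z : Fin n → ℤ} (hx : x ∈ boundedFiber A b l u)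
    (hz : z ∈ boundedFiber A b l u) (hxz : x ≠ z) :
    ∃ g ∈ GraverBasis A, x + g ∈ boundedFiber A b l u ∧ z - g ∈ boundedFiber A b l u := by
  have hA : A.mulVec (z - x) = 0 := by rw [Matrix.mulVec_sub, hz.1, hx.1, sub_self]
  obtain ⟨g, hg, hgzx⟩ := exists_mem_graverBasis_conforms A (sub_ne_zero.2 hxz.symm) hA
  have hmem : ∀ y, A.mulVec y = 0 → Conforms y (z - x) → x + y ∈ boundedFiber A b l u :=
    fun y hyA hy => ⟨by rw [Matrix.mulVec_add, hyA, hx.1, add_zero], hy.add_mem_box hx.2 hz.2⟩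
  refine ⟨g, hg, hmem g hg.2.1 hgzx, ?_⟩
  have hzg : x + (z - x - g) = z - g := by abel
  exact hzg ▸ hmem _ (by rw [Matrix.mulVec_sub, hA, hg.2.1, sub_self]) hgzx.sub_left

section Segment

open Set

variable {𝕜 E : Type*} [Field 𝕜] [LinearOrder 𝕜] [IsStrictOrderedRing 𝕜]
  [AddCommGroup E] [Module 𝕜 E] {C s : Set E} {p q a b : E}

lemma left_mem_extremePoints_segment_s15 (x y : E) : x ∈ (segment 𝕜 x y).extremePoints 𝕜 := by
  refine ⟨left_mem_segment 𝕜 x y, ?_⟩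
  rw [segment_eq_image']
  rintro _ ⟨s, ⟨hs, -⟩, rfl⟩ _ ⟨t, ⟨ht, -⟩, rfl⟩ ⟨a, b, ha, hb, hab, hx⟩
  have hcomb : (a * s + b * t) • (y - x) = 0 := by
    linear_combination (norm := module) hx - hab • x
  rcases smul_eq_zero.1 hcomb with hst | hyx
  · obtain ⟨rfl, rfl⟩ : s = 0 ∧ t = 0 := by
      constructor <;> nlinarith [mul_nonneg ha.le hs, mul_nonneg hb.le ht]
    simp
  · simp [hyx]

lemma IsExtreme.left_mem_of_convexHull_s15 (h : IsExtreme 𝕜 (convexHull 𝕜 s) (segment 𝕜 p q)) :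
    p ∈ s :=
  extremePoints_convexHull_subset <|
    (h.trans (isExtreme_singleton.2 (left_mem_extremePoints_segment_s15 p q))).mem_extremePoints

lemma IsExtreme.right_mem_of_convexHull (h : IsExtreme 𝕜 (convexHull 𝕜 s) (segment 𝕜 p q)) :
    q ∈ s :=
  (segment_symm 𝕜 p q ▸ h).left_mem_of_convexHull_s15

/-- The midpoint of `[p, q]` is also the midpoint of `[a, b]`. -/
lemma IsExtreme.mem_segment_of_add_eq_s15 (h : IsExtreme 𝕜 C (segment 𝕜 p q)) (ha : a ∈ C)
    (hb : b ∈ C) (hab : a + b = p + q) : a ∈ segment 𝕜 p q := by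
  have hp : (2⁻¹ : 𝕜) • p + (2⁻¹ : 𝕜) • q ∈ segment 𝕜 p q :=
    ⟨2⁻¹, 2⁻¹, by norm_num, by norm_num, by norm_num, rfl⟩
  have ha' : (2⁻¹ : 𝕜) • p + (2⁻¹ : 𝕜) • q ∈ openSegment 𝕜 a b :=
    ⟨2⁻¹, 2⁻¹, by norm_num, by norm_num, by norm_num, by rw [← smul_add, ← smul_add, hab]⟩
  exact h.left_mem_of_mem_openSegment ha hb hp ha'

lemma IsExtreme.exists_sub_eq_smul_of_add_eq (h : IsExtreme 𝕜 C (segment 𝕜 p q)) (ha : a ∈ C)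
    (hb : b ∈ C) (hab : a + b = p + q) (hap : a ≠ p) :
    ∃ c : 𝕜, c ≠ 0 ∧ p - q = c • (a - p) := by
  obtain ⟨t, -, rfl⟩ := segment_eq_image' 𝕜 p q ▸ h.mem_segment_of_add_eq_s15 ha hb hab
  have ht : t ≠ 0 := by rintro rfl; simp at hap
  exact ⟨-t⁻¹, by simpa using ht, by rw [add_sub_cancel_left, smul_smul]; field_simp; module⟩

end Segment

lemma IsEdgeOf.exists_mem_graverBasis_parallel {m n : ℕ} {A : Matrix (Fin m) (Fin n) ℤ}
    {b : Fin m → ℤ} {l u : Fin n → ℤ} {p q : Fin n → ℝ}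
    (h : IsEdgeOf (convexHull ℝ ((fun x : Fin n → ℤ => fun i => (x i : ℝ)) ''
      boundedFiber A b l u)) p q) :
    ∃ g ∈ GraverBasis A, ∃ c : ℝ, c ≠ 0 ∧ p - q = c • fun i => (g i : ℝ) := by
  obtain ⟨hpq, hext⟩ := h
  obtain ⟨x, hx, rfl⟩ := hext.left_mem_of_convexHull_s15
  obtain ⟨z, hz, rfl⟩ := hext.right_mem_of_convexHull
  obtain ⟨g, hg, hxg, hzg⟩ :=
    exists_mem_graverBasis_add_mem_boundedFiber hx hz (by rintro rfl; exact hpq rfl)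
  have hcast : (fun i => ((x + g) i : ℝ)) - (fun i => (x i : ℝ)) = fun i => (g i : ℝ) := by
    funext i
    simp
  obtain ⟨c, hc, hpq'⟩ := hext.exists_sub_eq_smul_of_add_eq
    (subset_convexHull ℝ _ (Set.mem_image_of_mem _ hxg))
    (subset_convexHull ℝ _ (Set.mem_image_of_mem _ hzg)) (by funext i; simp)
    (fun hxgx => hg.1 <| funext fun i => by simpa using congrFun hxgx i)
  exact ⟨g, hg, c, hc, hcast ▸ hpq'⟩

theorem stmt_15_general (m n : ℕ) (A : Matrix (Fin m) (Fin n) ℤ) (b : Fin m → ℤ)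
    (l u : Fin n → ℤ)
    (S : Set (Fin n → ℤ))
    (hS : S = {x | A.mulVec x = b ∧ ∀ i, l i ≤ x i ∧ x i ≤ u i})
    (Sr : Set (Fin n → ℝ)) (hSr : Sr = (fun x : Fin n → ℤ => fun i => (x i : ℝ)) '' S) :
    (∀ p q : Fin n → ℝ, IsEdgeOf (convexHull ℝ Sr) p q →
      ∃ g ∈ GraverBasis A, ∃ c : ℝ, c ≠ 0 ∧ p - q = c • fun i => (g i : ℝ)) ∧
    ∀ N : ℕ, (∀ g ∈ GraverBasis A, ∑ i, (g i).natAbs ≤ N) →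
      ∀ p q : Fin n → ℝ, IsEdgeOf (convexHull ℝ Sr) p q →
        ∃ w : Fin n → ℤ, (∑ i, (w i).natAbs) ≤ N ∧
          ∃ c : ℝ, c ≠ 0 ∧ p - q = c • fun i => (w i : ℝ) := by
  change S = boundedFiber A b l u at hS
  subst hS hSr
  exact ⟨fun p q => IsEdgeOf.exists_mem_graverBasis_parallel, fun N hN p q hpq =>
    hpq.exists_mem_graverBasis_parallel.imp fun g ⟨hg, hc⟩ => ⟨hN g hg, hc⟩⟩

/-- For `S = {x ∈ ℤⁿ : Ax = b, l ≤ x ≤ u}` nonempty and finite, every edge of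
`conv(S)` is parallel to an element of the Graver basis of `A`; consequently the
edge complexity of `S` is at most `max{‖g‖₁ : g ∈ 𝒢(A)}`. -/
theorem stmt_15 (m n : ℕ) (A : Matrix (Fin m) (Fin n) ℤ) (b : Fin m → ℤ)
    (l u : Fin n → ℤ)
    (S : Set (Fin n → ℤ))
    (hS : S = {x | A.mulVec x = b ∧ ∀ i, l i ≤ x i ∧ x i ≤ u i})
    (hne : S.Nonempty) (hfin : S.Finite)
    (Sr : Set (Fin n → ℝ)) (hSr : Sr = (fun x : Fin n → ℤ => fun i => (x i : ℝ)) '' S) :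
    (∀ p q : Fin n → ℝ, IsEdgeOf (convexHull ℝ Sr) p q →
      ∃ g ∈ GraverBasis A, ∃ c : ℝ, c ≠ 0 ∧ p - q = c • fun i => (g i : ℝ)) ∧
    ∀ N : ℕ, (∀ g ∈ GraverBasis A, ∑ i, (g i).natAbs ≤ N) →
      ∀ p q : Fin n → ℝ, IsEdgeOf (convexHull ℝ Sr) p q →
        ∃ w : Fin n → ℤ, (∑ i, (w i).natAbs) ≤ N ∧
          ∃ c : ℝ, c ≠ 0 ∧ p - q = c • fun i => (w i : ℝ) :=
  stmt_15_general m n A b l u S hS Sr hSr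
end
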